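/- Let q be a prime power, k ≥ 2 an integer, and t = ⌊(k+2)/4⌋. If u and v are adjacent vertices of the graph D(k,q), then a_r(u) = a_r(v) for every r with 2 ≤ r ≤ t; consequently a(u) = a(v). -/

import Mathlib

/-- Extend a vector `Fin k → F` to `ℕ → F` by zeros. -/
def extD {F : Type} [Zero F] {k : ℕ} (v : Fin k → F) : ℕ → F :=
  fun m => if h : m < k then v ⟨m, h⟩ else 0

/-- Right-hand side of the `m`-th incidence equation of `D(k,q)`
(coordinates are numbered from `0`, so the `m`-th equation concerns the
coordinate with index `m`). -/
def rhsD {F : Type} [Mul F] (p l : ℕ → F) : ℕ → F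
  | 1 => l 0 * p 0
  | 2 => l 1 * p 0
  | m => if m % 4 = 0 ∨ m % 4 = 3 then l 0 * p (m - 2) else l (m - 2) * p 0

/-- The incidence relation between a point `p` and a line `l`:
the first `k - 1` incidence equations hold. -/
def incD {F : Type} [Field F] (k : ℕ) (p l : Fin k → F) : Prop :=
  ∀ m, 1 ≤ m → m < k → extD l m - extD p m = rhsD (extD p) (extD l) m

/-- The bipartite graph `D(k,q)`; vertices are points (`Sum.inl`) and
lines (`Sum.inr`), both copies of `GF(q)^k`. -/
def DGraph (k : ℕ) (F : Type) [Field F] :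
    SimpleGraph ((Fin k → F) ⊕ (Fin k → F)) where
  Adj x y :=
    match x, y with
    | Sum.inl p, Sum.inr l => incD k p l
    | Sum.inr l, Sum.inl p => incD k p l
    | Sum.inl _, Sum.inl _ => False
    | Sum.inr _, Sum.inr _ => False
  symm := by constructor; rintro (p | l) (p' | l') h <;> exact h
  loopless := by constructor; rintro (p | l) h <;> exact h


/-- `u_{ii}` (with the convention `u_{00} = -1`). -/
def ddD {F : Type} [Field F] (u : ℕ → F) : ℕ → F
  | 0 => -1
  | 1 => u 1
  | (i + 2) => u (4 * i + 4)

/-- `u'_{ii}` (with the conventions `u'_{00} = 1`, `u'_{11} = u_{11}`). -/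
def dd'D {F : Type} [Field F] (u : ℕ → F) : ℕ → F
  | 0 => 1
  | 1 => u 1
  | (i + 2) => u (4 * i + 5)

/-- `u_{i,i+1}`; for a point `p_{01} = p_1`, for a line `l_{01} = 0`. -/
def hiD {F : Type} [Field F] (isPt : Bool) (u : ℕ → F) : ℕ → F
  | 0 => if isPt then u 0 else 0
  | 1 => u 2
  | (i + 2) => u (4 * i + 6)

/-- `u_{i,i-1}`; `u_{0,-1} = 0`, and for a point `p_{10} = 0`,
for a line `l_{10} = l_1`. -/
def loD {F : Type} [Field F] (isPt : Bool) (u : ℕ → F) : ℕ → F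
  | 0 => 0
  | 1 => if isPt then 0 else u 0
  | (i + 2) => u (4 * i + 3)

/-- The invariant `a_r(x)` of a vertex `x` of `D(k,q)`. -/
def aD {F : Type} [Field F] {k : ℕ} (r : ℕ) (x : (Fin k → F) ⊕ (Fin k → F)) : F :=
  ∑ i ∈ Finset.range (r + 1),
    (ddD (extD (Sum.elim id id x)) i * dd'D (extD (Sum.elim id id x)) (r - i) -
      hiD x.isLeft (extD (Sum.elim id id x)) i * loD x.isLeft (extD (Sum.elim id id x)) (r - i))

/-- The vector `a(x) = (a_2(x), …, a_t(x))`. -/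
def aVecD {F : Type} [Field F] {k : ℕ} (t : ℕ) (x : (Fin k → F) ⊕ (Fin k → F)) :
    Fin (t - 1) → F :=
  fun j => aD (j.val + 2) x

/-!
Write `x = l_1`, `y = p_1` for an adjacent point `p` and line `l`. Every incidence equation
says that a coordinate of `l` is the corresponding coordinate of `p` plus `x` or `y` times a
neighbouring coordinate. Substituted into `a_r(l) = Σ_{i+j=r} (l_{ii} l'_{jj} - l_{i,i+1} l_{j,j-1})`,
the `y`-corrections cancel term by term, and the two `x`-corrections left over are both
`x · Σ_{i+j=r-1} p_{i,i+1} p'_{jj}`, so `a_r(l) = a_r(p)`.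
The argument uses only the first `4r - 3` incidence equations, which hold in `D(k,q)` as long
as `4r ≤ k + 2`.
-/

open Finset

theorem Finset.Nat.sum_antidiagonal_mul_sub_mul_eq {R : Type*} [CommRing R] {r : ℕ} {x y : R}
    {d d' hi lo D D' Hi Lo : ℕ → R}
    (hD₀ : D 0 = d 0) (hD : ∀ i < r, D (i + 1) = d (i + 1) + x * hi i)
    (hLo₀ : Lo 0 = 0) (hlo₀ : lo 0 = 0) (hLo : ∀ j < r, Lo (j + 1) = lo (j + 1) + x * d' j)
    (hD' : ∀ j ≤ r, D' j = d' j + y * Lo j) (hHi : ∀ i < r, Hi i = hi i + y * D i) :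
    ∑ ij ∈ antidiagonal r, (D ij.1 * D' ij.2 - Hi ij.1 * Lo ij.2) =
      ∑ ij ∈ antidiagonal r, (d ij.1 * d' ij.2 - hi ij.1 * lo ij.2) := by
  have hy : ∀ ij ∈ antidiagonal r,
      D ij.1 * D' ij.2 - Hi ij.1 * Lo ij.2 = D ij.1 * d' ij.2 - hi ij.1 * Lo ij.2 := by
    rintro ⟨i, _ | j⟩ hij <;> rw [HasAntidiagonal.mem_antidiagonal] at hij
    · simp [hD' 0 (Nat.zero_le r), hLo₀]
    · rw [hD' (j + 1) (by omega), hHi i (by omega)]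
      ring
  rw [sum_congr rfl hy]
  rcases r with _ | n
  · simp [hD₀, hLo₀, hlo₀]
  have hx_left : ∑ ij ∈ antidiagonal (n + 1), (D ij.1 - d ij.1) * d' ij.2 =
      x * ∑ ij ∈ antidiagonal n, hi ij.1 * d' ij.2 := by
    rw [Nat.sum_antidiagonal_succ, hD₀, sub_self, zero_mul, zero_add, mul_sum]
    refine sum_congr rfl fun ij hij => ?_
    rw [hD ij.1 (by rw [HasAntidiagonal.mem_antidiagonal] at hij; omega)]
    ring
  have hx_right : ∑ ij ∈ antidiagonal (n + 1), hi ij.1 * (Lo ij.2 - lo ij.2) =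
      x * ∑ ij ∈ antidiagonal n, hi ij.1 * d' ij.2 := by
    rw [Nat.sum_antidiagonal_succ', hLo₀, hlo₀, sub_self, mul_zero, zero_add, mul_sum]
    refine sum_congr rfl fun ij hij => ?_
    rw [hLo ij.2 (by rw [HasAntidiagonal.mem_antidiagonal] at hij; omega)]
    ring
  rw [← sub_eq_zero, ← sum_sub_distrib]
  calc _ = ∑ ij ∈ antidiagonal (n + 1),
        ((D ij.1 - d ij.1) * d' ij.2 - hi ij.1 * (Lo ij.2 - lo ij.2)) :=
        sum_congr rfl fun _ _ => by ring
    _ = 0 := by rw [sum_sub_distrib, hx_left, hx_right, sub_self]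

namespace incD

variable {F : Type} [Field F] {k : ℕ} {p l : Fin k → F}

theorem coord_one (h : incD k p l) (hk : 1 < k) :
    extD l 1 = extD p 1 + extD l 0 * extD p 0 := by
  have e : extD l 1 - extD p 1 = extD l 0 * extD p 0 := h 1 le_rfl hk
  linear_combination e

theorem coord_two (h : incD k p l) (hk : 2 < k) :
    extD l 2 = extD p 2 + extD l 1 * extD p 0 := by
  have e : extD l 2 - extD p 2 = extD l 1 * extD p 0 := h 2 (by norm_num) hk
  linear_combination e

theorem coord_add_three (h : incD k p l) {n : ℕ} (hk : n + 3 < k) :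
    extD l (n + 3) - extD p (n + 3) = if (n + 3) % 4 = 0 ∨ (n + 3) % 4 = 3
      then extD l 0 * extD p (n + 1) else extD l (n + 1) * extD p 0 :=
  h (n + 3) (by omega) hk

theorem coord_add_two_of_mod_four_eq_zero_or_three (h : incD k p l) {n : ℕ} (hn : 1 ≤ n)
    (hk : n + 2 < k) (hmod : (n + 2) % 4 = 0 ∨ (n + 2) % 4 = 3) :
    extD l (n + 2) = extD p (n + 2) + extD l 0 * extD p n := by
  obtain ⟨n, rfl⟩ : ∃ n', n = n' + 1 := ⟨n - 1, by omega⟩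
  have e := h.coord_add_three hk
  rw [if_pos hmod] at e
  linear_combination e

theorem coord_add_two_of_mod_four_eq_one_or_two (h : incD k p l) {n : ℕ} (hn : 1 ≤ n)
    (hk : n + 2 < k) (hmod : (n + 2) % 4 = 1 ∨ (n + 2) % 4 = 2) :
    extD l (n + 2) = extD p (n + 2) + extD l n * extD p 0 := by
  obtain ⟨n, rfl⟩ : ∃ n', n = n' + 1 := ⟨n - 1, by omega⟩
  have e := h.coord_add_three hk
  rw [if_neg (by omega)] at e
  linear_combination e

theorem ddD_succ (h : incD k p l) {i : ℕ} (hi : 4 * (i + 1) ≤ k + 2) :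
    ddD (extD l) (i + 1) = ddD (extD p) (i + 1) + extD l 0 * hiD true (extD p) i :=
  match i with
  | 0 => h.coord_one (by omega)
  | 1 => h.coord_add_two_of_mod_four_eq_zero_or_three (n := 2) (by omega) (by omega) (by omega)
  | j + 2 => h.coord_add_two_of_mod_four_eq_zero_or_three (n := 4 * j + 6) (by omega) (by omega)
      (by omega)

theorem dd'D_eq (h : incD k p l) {j : ℕ} (hj : 4 * j ≤ k + 2) :
    dd'D (extD l) j = dd'D (extD p) j + extD p 0 * loD false (extD l) j :=
  match j with
  | 0 => by simp [dd'D, loD]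
  | 1 => by
    rw [mul_comm]
    exact h.coord_one (by omega)
  | i + 2 => by
    rw [mul_comm]
    exact h.coord_add_two_of_mod_four_eq_one_or_two (n := 4 * i + 3) (by omega) (by omega)
      (by omega)

theorem hiD_eq (h : incD k p l) {i : ℕ} (hi : 4 * i + 2 ≤ k) :
    hiD false (extD l) i = hiD true (extD p) i + extD p 0 * ddD (extD l) i :=
  match i with
  | 0 => by simp [hiD, ddD]
  | 1 => by
    rw [mul_comm]
    exact h.coord_two (by omega)
  | j + 2 => by
    rw [mul_comm]
    exact h.coord_add_two_of_mod_four_eq_one_or_two (n := 4 * j + 4) (by omega) (by omega)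
      (by omega)

theorem loD_succ (h : incD k p l) {j : ℕ} (hj : 4 * (j + 1) ≤ k + 2) :
    loD false (extD l) (j + 1) = loD true (extD p) (j + 1) + extD l 0 * dd'D (extD p) j :=
  match j with
  | 0 => by simp [loD, dd'D]
  | 1 => h.coord_add_two_of_mod_four_eq_zero_or_three (n := 1) le_rfl (by omega) (by omega)
  | i + 2 => h.coord_add_two_of_mod_four_eq_zero_or_three (n := 4 * i + 5) (by omega)
      (by omega) (by omega)

end incD

theorem aD_inl_eq_aD_inr {F : Type} [Field F] {k r : ℕ} {p l : Fin k → F} (h : incD k p l)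
    (hr : 4 * r ≤ k + 2) :
    aD r (Sum.inl p : (Fin k → F) ⊕ (Fin k → F)) = aD r (Sum.inr l) := by
  have key := Finset.Nat.sum_antidiagonal_mul_sub_mul_eq (r := r)
    (d := ddD (extD p)) (D := ddD (extD l)) (lo := loD true (extD p)) (Lo := loD false (extD l))
    rfl (fun i _ => h.ddD_succ (i := i) (by omega)) rfl rfl
    (fun j _ => h.loD_succ (j := j) (by omega)) (fun j _ => h.dd'D_eq (j := j) (by omega))
    (fun i _ => h.hiD_eq (i := i) (by omega))
  simpa [aD, Nat.sum_antidiagonal_eq_sum_range_succ_mk] using key.symm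

theorem statement5 (k : ℕ) (F : Type) [Field F]
    (u v : (Fin k → F) ⊕ (Fin k → F))
    (huv : (DGraph k F).Adj u v) :
    (∀ r, 2 ≤ r → r ≤ (k + 2) / 4 → aD r u = aD r v) ∧
    aVecD ((k + 2) / 4) u = aVecD ((k + 2) / 4) v := by
  have ha : ∀ r, 2 ≤ r → r ≤ (k + 2) / 4 → aD r u = aD r v := by
    intro r _ hrt
    have hr : 4 * r ≤ k + 2 := by omega
    match u, v, huv with
    | Sum.inl _, Sum.inr _, h => exact aD_inl_eq_aD_inr h hr
    | Sum.inr _, Sum.inl _, h => exact (aD_inl_eq_aD_inr h hr).symm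
  exact ⟨ha, funext fun j => ha _ (by omega) (by omega)⟩
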